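/- arXiv:2409.13009 — 5 statements merged into one kernel-verified Lean document; each statement's English description precedes it below -/
import Mathlib

section
/- Let A, B, C be complex matrices (with A, C square of sizes m×m and n×n respectively, and B of size m×n) such that the block matrix fromBlocks A B Bᴴ C is positive semidefinite. Then [Re Tr(Bᴴ B)]² ≤ Re Tr(A²) · Re Tr(C²). -/
/-!
A positive semidefinite block matrix is a Gram matrix: `A = XᴴX`, `B = XᴴY`, `C = YᴴY`.
By cyclicity of the trace, `Tr(A²)`, `Tr(BᴴB)` and `Tr(C²)` are the Frobenius inner products
`⟪P, P⟫`, `⟪P, Q⟫` and `⟪Q, Q⟫` of `P = XXᴴ` and `Q = YYᴴ`, so the inequality is Cauchy–Schwarz.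
-/

open Matrix ComplexOrder

namespace Matrix

variable {𝕜 : Type*} [RCLike 𝕜]

theorem re_trace_mul_conjTranspose_sq_le {k : Type*} [Fintype k] [DecidableEq k]
    (X Y : Matrix k k 𝕜) :
    RCLike.re (Y * Xᴴ).trace ^ 2 ≤ RCLike.re (X * Xᴴ).trace * RCLike.re (Y * Yᴴ).trace := by
  -- the inner product induced by the identity matrix is the Frobenius one
  let := toMatrixSeminormedAddCommGroup (1 : Matrix k k 𝕜) PosSemidef.one
  let := toMatrixInnerProductSpace (1 : Matrix k k 𝕜) PosSemidef.one
  have inner_eq (U V : Matrix k k 𝕜) : inner 𝕜 U V = (V * Uᴴ).trace := by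
    change (V * 1 * Uᴴ).trace = _
    rw [Matrix.mul_one]
  have h_re := RCLike.abs_re_le_norm (inner 𝕜 X Y)
  have h_cs := norm_inner_le_norm (𝕜 := 𝕜) X Y
  have hX := norm_sq_eq_re_inner (𝕜 := 𝕜) X
  have hY := norm_sq_eq_re_inner (𝕜 := 𝕜) Y
  rw [inner_eq] at h_re h_cs hX hY
  rw [← hX, ← hY, ← sq_abs, ← mul_pow]
  gcongr
  exact h_re.trans h_cs

theorem trace_conjTranspose_mul_mul_conjTranspose_mul {R k m n : Type*} [CommSemiring R]
    [StarRing R] [Fintype k] [Fintype m] [Fintype n] (X : Matrix k m R) (Y : Matrix k n R) :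
    (Xᴴ * Y * (Yᴴ * X)).trace = (Y * Yᴴ * (X * Xᴴ)ᴴ).trace := by
  rw [conjTranspose_mul, conjTranspose_conjTranspose, ← Matrix.mul_assoc, trace_mul_comm,
    ← Matrix.mul_assoc, ← Matrix.mul_assoc, Matrix.mul_assoc (X * Xᴴ), trace_mul_comm]

namespace PosSemidef

variable {m n : Type*} [Fintype m] [Fintype n]
  {A : Matrix m m 𝕜} {B : Matrix m n 𝕜} {C : Matrix n n 𝕜}

theorem exists_gram_of_fromBlocks (h : (fromBlocks A B Bᴴ C).PosSemidef) :
    ∃ (X : Matrix (m ⊕ n) m 𝕜) (Y : Matrix (m ⊕ n) n 𝕜),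
      A = Xᴴ * X ∧ B = Xᴴ * Y ∧ C = Yᴴ * Y := by
  classical
  open scoped MatrixOrder in
  obtain ⟨S, hS⟩ := CStarAlgebra.nonneg_iff_eq_star_mul_self.mp h.nonneg
  refine ⟨S.toCols₁, S.toCols₂, ?_⟩
  rw [← fromCols_toCols S, star_eq_conjTranspose, conjTranspose_fromCols_eq_fromRows_conjTranspose,
    fromRows_mul_fromCols] at hS
  obtain ⟨hA, hB, -, hC⟩ := fromBlocks_inj.mp hS
  exact ⟨hA, hB, hC⟩

theorem re_trace_conjTranspose_mul_self_sq_le (h : (fromBlocks A B Bᴴ C).PosSemidef) :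
    RCLike.re (Bᴴ * B).trace ^ 2 ≤ RCLike.re (A * A).trace * RCLike.re (C * C).trace := by
  classical
  obtain ⟨X, Y, rfl, rfl, rfl⟩ := h.exists_gram_of_fromBlocks
  rw [conjTranspose_mul, conjTranspose_conjTranspose, mul_comm,
    trace_conjTranspose_mul_mul_conjTranspose_mul Y X,
    trace_conjTranspose_mul_mul_conjTranspose_mul, trace_conjTranspose_mul_mul_conjTranspose_mul]
  exact re_trace_mul_conjTranspose_sq_le (Y * Yᴴ) (X * Xᴴ)

end PosSemidef

end Matrix

/-- If the block matrix `fromBlocks A B Bᴴ C` is positive semidefinite, then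
`[Re Tr(Bᴴ B)]² ≤ Re Tr(A²) ⬝ Re Tr(C²)`. -/
theorem block_psd_trace_inequality {m n : Type*} [Fintype m] [Fintype n]
    (A : Matrix m m ℂ) (B : Matrix m n ℂ) (C : Matrix n n ℂ)
    (h : (Matrix.fromBlocks A B Bᴴ C).PosSemidef) :
    ((Bᴴ * B).trace.re) ^ 2 ≤ (A * A).trace.re * (C * C).trace.re :=
  h.re_trace_conjTranspose_mul_self_sq_le
end

section
/- Let C and X be Hermitian complex matrices of the same finite size such that both C − X and C + X are positive semidefinite. Then Re Tr(X²) ≤ Re Tr(C²). -/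
open Matrix ComplexOrder

open scoped MatrixOrder in
/-- Writing `B = Qᴴ Q`, cyclicity gives `Tr (A B) = Tr (Q A Qᴴ)`, the trace of a positive
semidefinite matrix. -/
theorem Matrix.PosSemidef.trace_mul_nonneg {n 𝕜 : Type*} [Fintype n] [RCLike 𝕜]
    {A B : Matrix n n 𝕜} (hA : A.PosSemidef) (hB : B.PosSemidef) : 0 ≤ (A * B).trace := by
  classical
  obtain ⟨Q, rfl⟩ := CStarAlgebra.nonneg_iff_eq_star_mul_self.mp hB.nonneg
  rw [← mul_assoc, trace_mul_comm, ← mul_assoc]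
  exact (hA.mul_mul_conjTranspose_same Q).trace_nonneg

theorem Matrix.trace_sub_mul_add {n R : Type*} [Fintype n] [CommRing R] (A B : Matrix n n R) :
    ((A - B) * (A + B)).trace = (A * A).trace - (B * B).trace := by
  rw [sub_mul, mul_add, mul_add, trace_sub, trace_add, trace_add, trace_mul_comm B A]
  ring

theorem trace_sq_le_of_psd_sub_add_general {n : Type*} [Fintype n]
    (C X : Matrix n n ℂ)
    (hsub : (C - X).PosSemidef) (hadd : (C + X).PosSemidef) :
    (X * X).trace.re ≤ (C * C).trace.re := by
  have h := hsub.trace_mul_nonneg hadd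
  rw [trace_sub_mul_add, sub_nonneg] at h
  exact (Complex.le_def.mp h).1

/-- If `C` and `X` are Hermitian and both `C - X` and `C + X` are positive
semidefinite, then `Re Tr(X²) ≤ Re Tr(C²)`. -/
theorem trace_sq_le_of_psd_sub_add {n : Type*} [Fintype n]
    (C X : Matrix n n ℂ) (hC : C.IsHermitian) (hX : X.IsHermitian)
    (hsub : (C - X).PosSemidef) (hadd : (C + X).PosSemidef) :
    (X * X).trace.re ≤ (C * C).trace.re :=
  trace_sq_le_of_psd_sub_add_general C X hsub hadd
end

section
/- Let Λ be a positive definite Hermitian complex matrix and A a positive semidefinite complex matrix of the same finite size. Then (Re Tr A)² ≤ Re Tr(Λ²) · Re Tr(Λ⁻¹ A Λ⁻¹ A). -/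
open Matrix ComplexOrder

/-! With `S = Λ^{1/2}`, we have `Tr A = Tr (Λ (S⁻¹ A S⁻¹))` and
`Tr ((S⁻¹ A S⁻¹)²) = Tr (Λ⁻¹ A Λ⁻¹ A)`, so the inequality is the Cauchy–Schwarz inequality for
the Hilbert–Schmidt inner product `⟪X, Y⟫ = Tr (Xᴴ Y)`, applied to the Hermitian matrices `Λ`
and `S⁻¹ A S⁻¹`. -/

namespace Matrix

theorem norm_trace_conjTranspose_mul_sq_le {𝕜 n : Type*} [RCLike 𝕜] [Fintype n]
    (X Y : Matrix n n 𝕜) :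
    ‖(Xᴴ * Y).trace‖ ^ 2 ≤ RCLike.re (Xᴴ * X).trace * RCLike.re (Yᴴ * Y).trace := by
  classical
  let _ := toMatrixSeminormedAddCommGroup (1 : Matrix n n 𝕜) PosSemidef.one
  let _ := toMatrixInnerProductSpace (1 : Matrix n n 𝕜) PosSemidef.one
  have inner_eq (U V : Matrix n n 𝕜) : inner 𝕜 Uᴴ Vᴴ = (Vᴴ * U).trace := by
    show (Vᴴ * 1 * Uᴴᴴ).trace = _
    simp only [Matrix.mul_one, conjTranspose_conjTranspose]
  have norm_trace_swap : ‖(Yᴴ * X).trace‖ = ‖(Xᴴ * Y).trace‖ := by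
    rw [← norm_star, ← trace_conjTranspose, conjTranspose_mul, conjTranspose_conjTranspose]
  have h := inner_mul_inner_self_le (𝕜 := 𝕜) Xᴴ Yᴴ
  rwa [inner_eq, inner_eq, inner_eq, inner_eq, norm_trace_swap, ← sq] at h

theorem re_trace_mul_sq_le {𝕜 n : Type*} [RCLike 𝕜] [Fintype n] {X Y : Matrix n n 𝕜}
    (hX : X.IsHermitian) (hY : Y.IsHermitian) :
    RCLike.re (X * Y).trace ^ 2 ≤ RCLike.re (X * X).trace * RCLike.re (Y * Y).trace :=
  calc RCLike.re (X * Y).trace ^ 2 ≤ ‖(X * Y).trace‖ ^ 2 :=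
        sq_le_sq' (neg_le_of_abs_le (RCLike.abs_re_le_norm _)) (RCLike.re_le_norm _)
    _ ≤ _ := by simpa only [hX.eq, hY.eq] using norm_trace_conjTranspose_mul_sq_le X Y

open scoped MatrixOrder in
theorem PosDef.exists_isHermitian_isUnit_mul_self_eq {𝕜 n : Type*} [RCLike 𝕜] [Fintype n]
    [DecidableEq n] {Λ : Matrix n n 𝕜} (hΛ : Λ.PosDef) :
    ∃ S : Matrix n n 𝕜, S.IsHermitian ∧ IsUnit S ∧ S * S = Λ :=
  ⟨CFC.sqrt Λ, (CFC.sqrt_nonneg Λ).posSemidef.isHermitian,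
    CFC.isUnit_sqrt_iff_isStrictlyPositive.mpr hΛ.isStrictlyPositive,
    CFC.sqrt_mul_sqrt_self Λ hΛ.posSemidef.nonneg⟩

section conjInv

variable {R n : Type*} [CommRing R] [Fintype n] [DecidableEq n] {S : Matrix n n R}

theorem trace_mul_self_mul_conj_inv (hS : IsUnit S) (A : Matrix n n R) :
    (S * S * (S⁻¹ * A * S⁻¹)).trace = A.trace := by
  rw [show S * S * (S⁻¹ * A * S⁻¹) = S * (S * S⁻¹) * A * S⁻¹ by simp only [Matrix.mul_assoc],
    mul_nonsing_inv _ ((isUnit_iff_isUnit_det S).mp hS), Matrix.mul_one, trace_conj hS]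

theorem trace_conj_inv_mul_self (hS : IsUnit S) (A : Matrix n n R) :
    (S⁻¹ * A * S⁻¹ * (S⁻¹ * A * S⁻¹)).trace = ((S * S)⁻¹ * A * (S * S)⁻¹ * A).trace := by
  rw [mul_inv_rev, ← trace_conj' hS]
  simp only [Matrix.mul_assoc, nonsing_inv_mul _ ((isUnit_iff_isUnit_det S).mp hS), Matrix.mul_one]

end conjInv

end Matrix

/-- For a positive definite Hermitian matrix `Λ` and a positive semidefinite
matrix `A`, `(Re Tr A)² ≤ Re Tr(Λ²) ⬝ Re Tr(Λ⁻¹ A Λ⁻¹ A)`. -/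
theorem trace_sq_le_posdef_conj {n : Type*} [Fintype n] [DecidableEq n]
    (Λ A : Matrix n n ℂ) (hΛ : Λ.PosDef) (hA : A.PosSemidef) :
    (A.trace.re) ^ 2 ≤ (Λ * Λ).trace.re * (Λ⁻¹ * A * Λ⁻¹ * A).trace.re := by
  obtain ⟨S, hS_herm, hS_unit, rfl⟩ := hΛ.exists_isHermitian_isUnit_mul_self_eq
  have hY : (S⁻¹ * A * S⁻¹).IsHermitian := by
    simpa only [hS_herm.inv.eq] using isHermitian_conjTranspose_mul_mul S⁻¹ hA.isHermitian
  calc A.trace.re ^ 2 = (S * S * (S⁻¹ * A * S⁻¹)).trace.re ^ 2 := by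
        rw [trace_mul_self_mul_conj_inv hS_unit]
    _ ≤ (S * S * (S * S)).trace.re * (S⁻¹ * A * S⁻¹ * (S⁻¹ * A * S⁻¹)).trace.re :=
        re_trace_mul_sq_le hΛ.isHermitian hY
    _ = _ := by rw [trace_conj_inv_mul_self hS_unit]
end

section
/- Let ρ be a Hermitian matrix on a bipartite system. Then the square of its partial transpose equals its Choi reduced matrix: (ρ^{T_B})² = ρ^{(2)}, i.e., for all indices, ∑_{(m,n)} ρ^{T_B}((i,j),(m,n)) · ρ^{T_B}((m,n),(k,l)) = ∑_{i'∈α} ∑_{m∈β} ρ((i,m),(i',j)) · conj(ρ((k,m),(i',l))). -/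
open Matrix ComplexOrder

/-- The partial transpose on the second factor of a bipartite system. -/
def partialTranspose {α β : Type*} (ρ : Matrix (α × β) (α × β) ℂ) :
    Matrix (α × β) (α × β) ℂ :=
  fun p q => ρ (p.1, q.2) (q.1, p.2)

/-- The Choi reduced matrix `ρ^{(2)}` of `ρ`. -/
noncomputable def choiReduced {α β : Type*} [Fintype α] [Fintype β]
    (ρ : Matrix (α × β) (α × β) ℂ) : Matrix (α × β) (α × β) ℂ :=
  fun p q => ∑ i' : α, ∑ m : β, ρ (p.1, m) (i', p.2) * star (ρ (q.1, m) (i', q.2))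

/-!
The Choi reduced matrix is `ρ^{T_B} (ρ^{T_B})ᴴ` for every `ρ`, and partial transposition commutes
with the conjugate transpose, so `ρ^{T_B}` is Hermitian whenever `ρ` is; then
`(ρ^{T_B})² = ρ^{T_B} (ρ^{T_B})ᴴ = ρ^{(2)}`.
-/

section

variable {α β : Type*}

theorem partialTranspose_conjTranspose (ρ : Matrix (α × β) (α × β) ℂ) :
    partialTranspose ρᴴ = (partialTranspose ρ)ᴴ :=
  rfl

theorem Matrix.IsHermitian.partialTranspose {ρ : Matrix (α × β) (α × β) ℂ}
    (hρ : ρ.IsHermitian) : (_root_.partialTranspose ρ).IsHermitian := by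
  rw [IsHermitian, ← partialTranspose_conjTranspose, hρ.eq]

variable [Fintype α] [Fintype β]

theorem choiReduced_eq_partialTranspose_mul_conjTranspose (ρ : Matrix (α × β) (α × β) ℂ) :
    choiReduced ρ = partialTranspose ρ * (partialTranspose ρ)ᴴ := by
  ext p q
  simp only [choiReduced, mul_apply, Fintype.sum_prod_type, conjTranspose_apply]
  rfl

theorem partialTranspose_mul_self_eq_choiReduced {ρ : Matrix (α × β) (α × β) ℂ}
    (hρ : ρ.IsHermitian) : partialTranspose ρ * partialTranspose ρ = choiReduced ρ := by
  rw [choiReduced_eq_partialTranspose_mul_conjTranspose, hρ.partialTranspose.eq]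

end

/-- For a Hermitian `ρ`, the square of the partial transpose equals the Choi
reduced matrix: `(ρ^{T_B})² = ρ^{(2)}` entrywise. -/
theorem partialTranspose_sq_eq_choiReduced {α β : Type*} [Fintype α] [Fintype β]
    (ρ : Matrix (α × β) (α × β) ℂ) (hρ : ρ.IsHermitian) :
    ∀ i k : α, ∀ j l : β,
      (∑ mn : α × β,
        partialTranspose ρ (i, j) mn * partialTranspose ρ mn (k, l)) =
      ∑ i' : α, ∑ m : β, ρ (i, m) (i', j) * star (ρ (k, m) (i', l)) := fun i k j l =>
  congrFun (congrFun (partialTranspose_mul_self_eq_choiReduced hρ) (i, j)) (k, l)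
end

section
/- Let p : ℝ → ℝ → ℝ and t > 0. Assume that for every (A₁, A₂) ∈ ℝ² there exist s₁, s₂ ∈ ℝ with s₁ + s₂ = A₁ + A₂ and p A₁ A₂ ≤ (p s₁ s₁ + p s₂ s₂)/2. Then for every (A₁, A₂) there exists s ∈ ℝ such that p A₁ A₂ + t·min A₁ A₂ ≤ p s s + t·s; consequently, the supremum of (A₁,A₂) ↦ p A₁ A₂ + t·min A₁ A₂ over ℝ² equals its supremum over the diagonal A₁ = A₂. -/
/-!
The point `(A₁, A₂)` is traded for the two diagonal points `(s₁, s₁)` and `(s₂, s₂)` of the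
splitting bound. Since `s₁ + s₂ = A₁ + A₂` and `min A₁ A₂ ≤ (A₁ + A₂) / 2`, the objective at
`(A₁, A₂)` is at most the average of the objective at the two diagonal points, hence at most
the larger of the two. Conversely every diagonal value is attained on `ℝ²`, so both suprema
range over mutually dominating families and coincide, bounded or not.
-/

open Set

theorem ciSup_eq_ciSup_of_forall_exists_le {α : Type*} {ι κ : Sort*}
    [ConditionallyCompleteLinearOrder α] {f : ι → α} {g : κ → α}
    (hf : ∀ i, ∃ j, f i ≤ g j) (hg : ∀ j, ∃ i, g j ≤ f i) :
    ⨆ i, f i = ⨆ j, g j :=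
  csSup_eq_csSup_of_forall_exists_le
    (forall_mem_range.2 fun i ↦ let ⟨j, h⟩ := hf i; ⟨g j, mem_range_self j, h⟩)
    (forall_mem_range.2 fun j ↦ let ⟨i, h⟩ := hg j; ⟨f i, mem_range_self i, h⟩)

section LinearOrderedField

variable {𝕜 : Type*} [Field 𝕜] [LinearOrder 𝕜] [IsStrictOrderedRing 𝕜]

theorem min_le_add_div_two (a b : 𝕜) : min a b ≤ (a + b) / 2 := by
  rcases le_total a b with hab | hab
  · rw [min_eq_left hab]; linarith
  · rw [min_eq_right hab]; linarith

theorem add_div_two_le_max (a b : 𝕜) : (a + b) / 2 ≤ max a b := by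
  rcases le_total a b with hab | hab
  · rw [max_eq_right hab]; linarith
  · rw [max_eq_left hab]; linarith

theorem add_mul_min_le_add_div_two_of_splitting {p : 𝕜 → 𝕜 → 𝕜} {t A₁ A₂ s₁ s₂ : 𝕜}
    (ht : 0 ≤ t) (hs : s₁ + s₂ = A₁ + A₂) (hp : p A₁ A₂ ≤ (p s₁ s₁ + p s₂ s₂) / 2) :
    p A₁ A₂ + t * min A₁ A₂ ≤ ((p s₁ s₁ + t * s₁) + (p s₂ s₂ + t * s₂)) / 2 := by
  have hmin : t * min A₁ A₂ ≤ t * ((s₁ + s₂) / 2) := by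
    rw [hs]
    exact mul_le_mul_of_nonneg_left (min_le_add_div_two A₁ A₂) ht
  linarith

theorem exists_diag_ge_of_splitting {p : 𝕜 → 𝕜 → 𝕜} {t A₁ A₂ s₁ s₂ : 𝕜}
    (ht : 0 ≤ t) (hs : s₁ + s₂ = A₁ + A₂) (hp : p A₁ A₂ ≤ (p s₁ s₁ + p s₂ s₂) / 2) :
    ∃ s, p A₁ A₂ + t * min A₁ A₂ ≤ p s s + t * s := by
  have havg := (add_mul_min_le_add_div_two_of_splitting ht hs hp).trans (add_div_two_le_max _ _)
  rcases le_total (p s₁ s₁ + t * s₁) (p s₂ s₂ + t * s₂) with hle | hle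
  · exact ⟨s₂, by rwa [max_eq_right hle] at havg⟩
  · exact ⟨s₁, by rwa [max_eq_left hle] at havg⟩

end LinearOrderedField

/-- If `p` satisfies the splitting bound
`p A₁ A₂ ≤ (p s₁ s₁ + p s₂ s₂)/2` for some `s₁ + s₂ = A₁ + A₂`, and `t > 0`,
then every value of `(A₁,A₂) ↦ p A₁ A₂ + t·min A₁ A₂` is dominated by a value
on the diagonal, and hence the supremum over `ℝ²` equals the supremum over the
diagonal `A₁ = A₂`. -/
theorem maximin_on_diagonal (p : ℝ → ℝ → ℝ) (t : ℝ) (ht : 0 < t)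
    (h : ∀ A₁ A₂ : ℝ, ∃ s₁ s₂ : ℝ, s₁ + s₂ = A₁ + A₂ ∧
      p A₁ A₂ ≤ (p s₁ s₁ + p s₂ s₂) / 2) :
    (∀ A₁ A₂ : ℝ, ∃ s : ℝ, p A₁ A₂ + t * min A₁ A₂ ≤ p s s + t * s) ∧
    (⨆ q : ℝ × ℝ, (p q.1 q.2 + t * min q.1 q.2)) = ⨆ s : ℝ, (p s s + t * s) := by
  have dominated : ∀ A₁ A₂ : ℝ, ∃ s : ℝ, p A₁ A₂ + t * min A₁ A₂ ≤ p s s + t * s := by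
    intro A₁ A₂
    obtain ⟨s₁, s₂, hs, hp⟩ := h A₁ A₂
    exact exists_diag_ge_of_splitting ht.le hs hp
  refine ⟨dominated, ciSup_eq_ciSup_of_forall_exists_le (fun q ↦ dominated q.1 q.2) ?_⟩
  exact fun s ↦ ⟨(s, s), by simp⟩
end
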